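/- Let phi_n(a,b) = (q;q)_n / (a;q)_{n+1} * sum_{k=0}^n (a;q)_k (b;q)_k / (q;q)_k * (-ab)^{n-k} * q^{binom(n,2)-binom(k,2)}. Then phi_n(a,b) = phi_{n-1}(aq, b) - b q^{n-1} phi_{n-1}(a,b) for all n ≥ 1. -/

import Mathlib

/-!
Write `φ_n = (q;q)_n / (a;q)_{n+1} · S_n(a)` with `S_n = phiSum`. Peeling off the top term gives
`S_{n+1}(a) = (a;q)_{n+1}(b;q)_{n+1}/(q;q)_{n+1} - ab q^n S_n(a)`, and with it an induction
shows `S_n(aq) - b q^n S_n(a) = (aq;q)_n (b;q)_{n+1}/(q;q)_n`. Substituting both into the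
recurrence leaves an identity of rational functions in the Pochhammer factors.
-/

open Finset

/-- The q-Pochhammer symbol `(a; q)_n = ∏_{j=0}^{n-1} (1 - a q^j)`. -/
noncomputable def qPoch (a q : ℂ) (n : ℕ) : ℂ := ∏ j ∈ Finset.range n, (1 - a * q ^ j)

/-- `φ_n(a,b) = (q;q)_n/(a;q)_{n+1} ∑_{k=0}^n (a,b;q)_k/(q;q)_k (-ab)^{n-k} q^{C(n,2)-C(k,2)}`. -/
noncomputable def phi (q a b : ℂ) (n : ℕ) : ℂ :=
  qPoch q q n / qPoch a q (n + 1) *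
    ∑ k ∈ range (n + 1),
      qPoch a q k * qPoch b q k / qPoch q q k * (-(a * b)) ^ (n - k)
        * q ^ (n.choose 2 - k.choose 2)

noncomputable def phiSum (q a b : ℂ) (n : ℕ) : ℂ :=
  ∑ k ∈ range (n + 1),
    qPoch a q k * qPoch b q k / qPoch q q k * (-(a * b)) ^ (n - k)
      * q ^ (n.choose 2 - k.choose 2)

lemma phi_eq_mul_phiSum (q a b : ℂ) (n : ℕ) :
    phi q a b n = qPoch q q n / qPoch a q (n + 1) * phiSum q a b n := rfl

lemma qPoch_succ (a q : ℂ) (n : ℕ) :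
    qPoch a q (n + 1) = qPoch a q n * (1 - a * q ^ n) :=
  prod_range_succ _ n

lemma qPoch_succ' (a q : ℂ) (n : ℕ) :
    qPoch a q (n + 1) = (1 - a) * qPoch (a * q) q n := by
  simp only [qPoch, prod_range_succ', pow_zero, mul_one, mul_comm (1 - a)]
  exact congrArg (· * (1 - a)) (prod_congr rfl fun j _ => by ring)

lemma qPoch_ne_zero {a q : ℂ} {n : ℕ} (ha : ∀ j < n, a * q ^ j ≠ 1) : qPoch a q n ≠ 0 :=
  prod_ne_zero_iff.mpr fun j hj h => ha j (mem_range.mp hj) (sub_eq_zero.mp h).symm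

lemma qPoch_self_ne_zero_of_norm_lt_one {q : ℂ} (hq : ‖q‖ < 1) (n : ℕ) : qPoch q q n ≠ 0 :=
  qPoch_ne_zero fun j _ h => by
    have : ‖q ^ (j + 1)‖ < 1 := by
      rw [norm_pow]
      exact pow_lt_one₀ (norm_nonneg q) hq (Nat.succ_ne_zero j)
    rw [pow_succ', h, norm_one] at this
    exact lt_irrefl 1 this

lemma choose_two_succ (m : ℕ) : (m + 1).choose 2 = m.choose 2 + m := by
  rw [Nat.choose_succ_succ', Nat.choose_one_right, add_comm]

lemma phiSum_succ (q a b : ℂ) (m : ℕ) :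
    phiSum q a b (m + 1) = qPoch a q (m + 1) * qPoch b q (m + 1) / qPoch q q (m + 1)
      - a * b * q ^ m * phiSum q a b m := by
  rw [phiSum, sum_range_succ, Nat.sub_self, Nat.sub_self, pow_zero, pow_zero, mul_one, mul_one,
    phiSum, mul_sum, sub_eq_add_neg, ← sum_neg_distrib, add_comm]
  congr 1
  refine sum_congr rfl fun k hk => ?_
  have hk : k ≤ m := Nat.lt_succ_iff.mp (mem_range.mp hk)
  have hc : k.choose 2 ≤ m.choose 2 := Nat.choose_le_choose 2 hk
  rw [show m + 1 - k = (m - k) + 1 by omega, choose_two_succ,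
    show m.choose 2 + m - k.choose 2 = (m.choose 2 - k.choose 2) + m by omega, pow_succ, pow_add]
  ring

lemma phiSum_shift_sub {q : ℂ} (a b : ℂ) {m : ℕ} (hq : qPoch q q m ≠ 0) :
    phiSum q (a * q) b m - b * q ^ m * phiSum q a b m
      = qPoch (a * q) q m * qPoch b q (m + 1) / qPoch q q m := by
  induction m generalizing a with
  | zero => simp [phiSum, qPoch]
  | succ m ih =>
    obtain ⟨hq₀, hqₘ⟩ := mul_ne_zero_iff.mp (qPoch_succ q q m ▸ hq)
    rw [phiSum_succ, phiSum_succ, eq_add_of_sub_eq' (ih a hq₀), qPoch_succ q q m,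
      qPoch_succ b q (m + 1), qPoch_succ (a * q) q m, qPoch_succ' a q m]
    field_simp
    ring

lemma phi_succ {q : ℂ} (a b : ℂ) {m : ℕ} (ha : qPoch a q (m + 2) ≠ 0)
    (hq : qPoch q q (m + 1) ≠ 0) :
    phi q a b (m + 1) = phi q (a * q) b m - b * q ^ m * phi q a b m := by
  rw [qPoch_succ', qPoch_succ, mul_ne_zero_iff, mul_ne_zero_iff] at ha
  obtain ⟨ha₀, hP, haₘ⟩ := ha
  obtain ⟨hq₀, hqₘ⟩ := mul_ne_zero_iff.mp (qPoch_succ q q m ▸ hq)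
  rw [phi_eq_mul_phiSum, phi_eq_mul_phiSum, phi_eq_mul_phiSum, phiSum_succ,
    eq_add_of_sub_eq' (phiSum_shift_sub a b hq₀), qPoch_succ' a q (m + 1), qPoch_succ' a q m,
    qPoch_succ (a * q), qPoch_succ q q m]
  -- `field_simp` writes the factor `1 - a * q * q ^ m` as `1 - q * q ^ m * a`
  rw [mul_assoc a, mul_comm a] at haₘ ⊢
  field_simp
  ring

/-- The recurrence `φ_n(a,b) = φ_{n-1}(aq,b) - b q^{n-1} φ_{n-1}(a,b)` for `n ≥ 1`. -/
theorem phi_recurrence (n : ℕ) (hn : 1 ≤ n) (a b q : ℂ) (hq : ‖q‖ < 1)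
    (ha : ∀ j ≤ n, a * q ^ j ≠ 1) :
    phi q a b n = phi q (a * q) b (n - 1) - b * q ^ (n - 1) * phi q a b (n - 1) := by
  obtain ⟨m, rfl⟩ : ∃ m, n = m + 1 := ⟨n - 1, (Nat.succ_pred_eq_of_pos hn).symm⟩
  rw [Nat.add_sub_cancel]
  exact phi_succ a b (qPoch_ne_zero fun j hj => ha j (by omega))
    (qPoch_self_ne_zero_of_norm_lt_one hq (m + 1))
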